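/- arXiv:2306.09808 — 2 statements merged into one kernel-verified Lean document; each statement's English description precedes it below -/
import Mathlib

section
/- Let A be a Prüfer domain with fraction field K, and let X → Spec(A) be a proper morphism of finite presentation. Then the natural map X(A) → X(K) on points is bijective. -/
/-!
Injectivity: `Spec A` is reduced and `Spec K → Spec A` is dominant, so two sections of the
separated morphism `f` that agree at the generic point are equal.

Surjectivity: given a `K`-point `t` and a prime `p`, the ring `A_p` is a valuation ring with
fraction field `K`, so the valuative criterion for the universally closed `f` extends `t` to
`Spec A_p`. As `f` is locally of finite type and `Spec A` is integral, this extension spreads out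
to a section over an open neighbourhood of `p`. By the injectivity argument these local sections
agree on overlaps, so they glue to a section extending `t`.
-/

open AlgebraicGeometry CategoryTheory CategoryTheory.Limits

lemma isDominant_Spec_map_of_injective {R S : CommRingCat} (φ : R ⟶ S)
    (hφ : Function.Injective φ) : IsDominant (Spec.map φ) :=
  ⟨(PrimeSpectrum.denseRange_comap_iff_ker_le_nilRadical φ.hom).mpr <| by
    rw [(RingHom.injective_iff_ker_eq_bot _).mp hφ]; exact bot_le⟩

lemma range_subset_of_isDominant {T Y : Scheme} (g : T ⟶ Y) [IsDominant g] [Subsingleton T]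
    {U : Y.Opens} (hU : (U : Set Y).Nonempty) : Set.range g ⊆ U := by
  obtain ⟨_, hyU, x, rfl⟩ := g.denseRange.inter_open_nonempty U U.isOpen hU
  rintro _ ⟨x', rfl⟩
  rwa [Subsingleton.elim x' x]

lemma ext_of_isOpenImmersion_of_isDominant_comp {S W T X : Scheme} [IsReduced S]
    (f : X ⟶ S) [IsSeparated f] (j : W ⟶ S) [IsOpenImmersion j] {g₁ g₂ : W ⟶ X}
    (hf : g₁ ≫ f = g₂ ≫ f) (γ : T ⟶ W) [IsDominant (γ ≫ j)] (h : γ ≫ g₁ = γ ≫ g₂) :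
    g₁ = g₂ := by
  have := isReduced_of_isOpenImmersion j
  have := IsDominant.of_comp_of_isOpenImmersion γ j
  exact ext_of_isDominant_of_isSeparated f hf γ h

instance isDominant_Spec_map_algebraMap_fractionRing (A : Type*) [CommRing A] [IsDomain A] :
    IsDominant (Spec.map (CommRingCat.ofHom (algebraMap A (FractionRing A)))) :=
  isDominant_Spec_map_of_injective _ (IsFractionRing.injective A (FractionRing A))

section IntegralBase

variable {R : CommRingCat} [IsDomain R] {X : Scheme} (f : X ⟶ Spec R)

local notation "K" => FractionRing R
local notation "η" => Spec.map (CommRingCat.ofHom (algebraMap R (FractionRing R)))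

lemma exists_lift_localizationAtPrime (hf : ValuativeCriterion.Existence f) (p : PrimeSpectrum R)
    [ValuationRing (Localization.AtPrime p.asIdeal)] (t : Spec (.of K) ⟶ X) (ht : t ≫ f = η) :
    ∃ l : Spec (.of (Localization.AtPrime p.asIdeal)) ⟶ X,
      Spec.map (CommRingCat.ofHom (algebraMap (Localization.AtPrime p.asIdeal) K)) ≫ l = t ∧
      l ≫ f = Spec.map (CommRingCat.ofHom (algebraMap R (Localization.AtPrime p.asIdeal))) := by
  have hsq : CommSq t (Spec.map (CommRingCat.ofHom (algebraMap _ K))) f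
      (Spec.map (CommRingCat.ofHom (algebraMap R (Localization.AtPrime p.asIdeal)))) :=
    ⟨by rw [ht, ← Spec.map_comp, ← CommRingCat.ofHom_comp, ← IsScalarTower.algebraMap_eq]⟩
  obtain ⟨⟨l, hl₁, hl₂⟩⟩ := hf ⟨_, _, t, _, hsq⟩
  exact ⟨l, hl₁, hl₂⟩

lemma exists_spreadOut_localizationAtPrime [LocallyOfFiniteType f] (p : PrimeSpectrum R)
    (l : Spec (.of (Localization.AtPrime p.asIdeal)) ⟶ X)
    (hl : l ≫ f = Spec.map (CommRingCat.ofHom (algebraMap R (Localization.AtPrime p.asIdeal)))) :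
    ∃ (U : (Spec R).Opens) (_ : p ∈ U) (h : U.toScheme ⟶ X)
      (ψ : Spec (.of (Localization.AtPrime p.asIdeal)) ⟶ U.toScheme),
      h ≫ f = U.ι ∧
      ψ ≫ U.ι = Spec.map (CommRingCat.ofHom (algebraMap R (Localization.AtPrime p.asIdeal))) ∧
      ψ ≫ h = l := by
  let e := Spec.stalkIso R p
  have he : (Spec R).fromSpecStalk p =
      Spec.map e.inv ≫ Spec.map (CommRingCat.ofHom (algebraMap R _)) := by
    rw [← Spec.map_comp, Spec.algebraMap_stalkIso_inv]
    exact Spec.fromSpecStalk_eq R p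
  -- instance search does not see `p : PrimeSpectrum R` as a point of `Spec R`
  have : (Spec R).IsGermInjectiveAt p := (inferInstance : (Spec R).IsGermInjective) p
  obtain ⟨U, hpU, h, hφ, hh⟩ := spread_out_of_isGermInjective' (𝟙 _) f (Spec.map e.inv ≫ l)
    (by rw [Category.assoc, hl, he, Category.comp_id])
  have hee : Spec.map e.hom ≫ Spec.map e.inv = 𝟙 _ := by
    rw [← Spec.map_comp, e.inv_hom_id, Spec.map_id]
  refine ⟨U, hpU, h, Spec.map e.hom ≫ U.fromSpecStalkOfMem p hpU, hh.trans (Category.comp_id _), ?_, ?_⟩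
  · rw [Category.assoc, U.fromSpecStalkOfMem_ι p hpU, he, reassoc_of% hee]
  · rw [Category.assoc, ← hφ, reassoc_of% hee]

lemma exists_extension_nhds_of_valuativeCriterion (hf : ValuativeCriterion.Existence f)
    [LocallyOfFiniteType f] (t : Spec (.of K) ⟶ X) (ht : t ≫ f = η) (p : PrimeSpectrum R)
    [ValuationRing (Localization.AtPrime p.asIdeal)] :
    ∃ (U : (Spec R).Opens) (_ : p ∈ U) (h : U.toScheme ⟶ X),
      h ≫ f = U.ι ∧ ∀ γ : Spec (.of K) ⟶ U.toScheme, γ ≫ U.ι = η → γ ≫ h = t := by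
  obtain ⟨l, hlt, hlf⟩ := exists_lift_localizationAtPrime f hf p t ht
  obtain ⟨U, hpU, h, ψ, hhf, hψ, hψh⟩ := exists_spreadOut_localizationAtPrime f p l hlf
  refine ⟨U, hpU, h, hhf, fun γ hγ => ?_⟩
  have hγψ : γ = Spec.map (CommRingCat.ofHom (algebraMap _ K)) ≫ ψ := by
    rw [← cancel_mono U.ι, hγ, Category.assoc, hψ, ← Spec.map_comp, ← CommRingCat.ofHom_comp,
      ← IsScalarTower.algebraMap_eq]
  rw [hγψ, Category.assoc, hψh, hlt]

lemma exists_section_of_extension_nhds [IsSeparated f] (t : Spec (.of K) ⟶ X)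
    (hloc : ∀ p : PrimeSpectrum R, ∃ (U : (Spec R).Opens) (_ : p ∈ U) (h : U.toScheme ⟶ X),
      h ≫ f = U.ι ∧ ∀ γ : Spec (.of K) ⟶ U.toScheme, γ ≫ U.ι = η → γ ≫ h = t) :
    ∃ s : Spec R ⟶ X, s ≫ f = 𝟙 _ ∧ η ≫ s = t := by
  choose U hU h hhf hht using hloc
  let 𝒰 := (Spec R).openCoverOfIsOpenCover U
    (.mk (eq_top_iff.mpr fun p _ => TopologicalSpace.Opens.mem_iSup.mpr ⟨p, hU p⟩))
  let γ p : Spec (.of K) ⟶ U p := IsOpenImmersion.lift (U p).ι η <| by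
    rw [Scheme.Opens.range_ι]; exact range_subset_of_isDominant η ⟨p, hU p⟩
  have hγ p : γ p ≫ (U p).ι = η := IsOpenImmersion.lift_fac _ _ _
  have compat p q : pullback.fst (U p).ι (U q).ι ≫ h p = pullback.snd _ _ ≫ h q := by
    let γpq := pullback.lift (γ p) (γ q) ((hγ p).trans (hγ q).symm)
    have : IsDominant (γpq ≫ pullback.fst _ _ ≫ (U p).ι) := by
      simpa only [γpq, pullback.lift_fst_assoc, hγ] using (inferInstance : IsDominant η)
    refine ext_of_isOpenImmersion_of_isDominant_comp f (pullback.fst _ _ ≫ (U p).ι) ?_ γpq ?_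
    · rw [Category.assoc, Category.assoc, hhf, hhf, pullback.condition]
    · rw [pullback.lift_fst_assoc, pullback.lift_snd_assoc, hht p _ (hγ p), hht q _ (hγ q)]
  let s := 𝒰.glueMorphisms (fun p => h p) compat
  have hs p : (U p).ι ≫ s = h p := 𝒰.ι_glueMorphisms _ _ p
  refine ⟨s, 𝒰.hom_ext _ _ fun (p : PrimeSpectrum R) => ?_, ?_⟩
  · change ((U p).ι ≫ s) ≫ f = (U p).ι ≫ 𝟙 _
    rw [hs, hhf, Category.comp_id]
  · obtain ⟨p⟩ : Nonempty (PrimeSpectrum R) := inferInstance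
    rw [← hγ p, Category.assoc, hs, hht p _ (hγ p)]

end IntegralBase

/-- Let `A` be a Prüfer domain (an integral domain all of whose localizations
at primes are valuation rings) with fraction field `K`, and let
`X → Spec A` be a proper morphism of finite presentation. Then the natural
map `X(A) → X(K)`, from sections over `Spec A` to `K`-points of the generic
fiber, is bijective. -/
theorem prufer_valuative_bijective (A : Type) [CommRing A] [IsDomain A]
    (hPrufer : ∀ (p : Ideal A) [p.IsPrime], ValuationRing (Localization.AtPrime p))
    (X : Scheme) (f : X ⟶ Spec (CommRingCat.of A))
    [IsProper f] :
    Function.Bijective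
      (fun s : {s : Spec (CommRingCat.of A) ⟶ X // s ≫ f = 𝟙 _} =>
        (⟨Spec.map (CommRingCat.ofHom (algebraMap A (FractionRing A))) ≫ s.1,
            by rw [Category.assoc, s.2, Category.comp_id]⟩ :
          {t : Spec (CommRingCat.of (FractionRing A)) ⟶ X //
            t ≫ f = Spec.map (CommRingCat.ofHom (algebraMap A (FractionRing A)))})) := by
  constructor
  · rintro ⟨s₁, hs₁⟩ ⟨s₂, hs₂⟩ h
    exact Subtype.ext <| ext_of_isDominant_of_isSeparated f (hs₁.trans hs₂.symm) _
      (congrArg Subtype.val h)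
  · rintro ⟨t, ht⟩
    have hf : ValuativeCriterion.Existence f :=
      (UniversallyClosed.eq_valuativeCriterion ▸ (inferInstance : UniversallyClosed f)).1
    obtain ⟨s, hs, hst⟩ := exists_section_of_extension_nhds f t fun p =>
      have := hPrufer p.asIdeal
      exists_extension_nhds_of_valuativeCriterion f hf t ht p
    exact ⟨⟨s, hs⟩, Subtype.ext hst⟩
end

section
/- Let S be a connected scheme, and let ι : W → ⊔_{h∈H} S be a morphism of S-schemes which is both an open immersion and finite (for a finite set H). Then W ≅ ⊔_{h∈H'} S for some subset H' ⊆ H. -/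
open AlgebraicGeometry CategoryTheory CategoryTheory.Limits

universe u

/-! A finite morphism is universally closed, so a finite open immersion has clopen image.
Each summand of `∐_H S` is connected, so a clopen subset is the union of the summands it meets,
and that union is the image of the open immersion `∐_{H'} S ⟶ ∐_H S` induced by the summand
inclusions. Two open immersions with the same image have isomorphic sources. -/

namespace AlgebraicGeometry

lemma isClopen_range_of_isOpenImmersion_of_universallyClosed {X Y : Scheme.{u}} (f : X ⟶ Y)
    [IsOpenImmersion f] [UniversallyClosed f] : IsClopen (Set.range f) :=
  ⟨f.isClosedMap.isClosed_range, f.isOpenEmbedding.isOpen_range⟩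

section Sigma

variable {σ : Type u} (g : σ → Scheme.{u})

lemma range_sigmaDesc {X : Scheme.{u}} (α : ∀ i, g i ⟶ X) :
    Set.range (Sigma.desc α) = ⋃ i, Set.range (α i) := by
  ext x
  simp only [Set.mem_range, Set.mem_iUnion]
  constructor
  · rintro ⟨y, rfl⟩
    obtain ⟨⟨i, y⟩, rfl⟩ := (sigmaMk g).surjective y
    exact ⟨i, y, by simp [← Scheme.Hom.comp_apply]⟩
  · rintro ⟨i, y, rfl⟩
    exact ⟨Sigma.ι g i y, by simp [← Scheme.Hom.comp_apply]⟩

instance isOpenImmersion_sigmaDesc_sigmaι (s : Set σ) :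
    IsOpenImmersion (Sigma.desc fun i : s ↦ Sigma.ι g i) :=
  isOpenImmersion_sigmaDesc _ _ fun i j hij ↦ by
    simpa [Function.onFun_apply, disjoint_iff, TopologicalSpace.Opens.ext_iff] using
      disjoint_opensRange_sigmaι g i j (Subtype.coe_injective.ne hij)

lemma range_sigmaι_subset_or_disjoint (i : σ) [ConnectedSpace (g i)] {U : Set (∐ g :)}
    (hU : IsClopen U) : Set.range (Sigma.ι g i) ⊆ U ∨ Disjoint (Set.range (Sigma.ι g i)) U :=
  (isClopen_iff.mp (hU.preimage (Sigma.ι g i).continuous)).symm.imp Set.preimage_eq_univ_iff.mp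
    fun h ↦ (Set.preimage_eq_empty_iff.mp h).symm

lemma range_sigmaDesc_sigmaι_of_isClopen [∀ i, ConnectedSpace (g i)] {U : Set (∐ g :)}
    (hU : IsClopen U) :
    Set.range (Sigma.desc fun i : {i | Set.range (Sigma.ι g i) ⊆ U} ↦ Sigma.ι g i) = U := by
  rw [range_sigmaDesc]
  refine subset_antisymm (Set.iUnion_subset fun i ↦ i.2) fun x hx ↦ ?_
  obtain ⟨⟨i, y⟩, rfl⟩ := (sigmaMk g).surjective x
  rw [sigmaMk_mk] at hx ⊢
  have hi : Set.range (Sigma.ι g i) ⊆ U :=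
    (range_sigmaι_subset_or_disjoint g i hU).resolve_right
      (Set.not_disjoint_iff.mpr ⟨_, ⟨y, rfl⟩, hx⟩)
  exact Set.mem_iUnion.mpr ⟨⟨i, hi⟩, y, rfl⟩

end Sigma

end AlgebraicGeometry

theorem clopen_in_constant_scheme_is_constant_general (S : Scheme.{u}) [ConnectedSpace S]
    (H : Type u) (W : Scheme.{u})
    (ι : W ⟶ ∐ (fun _ : H => S)) [IsOpenImmersion ι] [IsFinite ι] :
    ∃ H' : Set H, Nonempty (W ≅ ∐ (fun _ : H' => S)) :=
  ⟨_, ⟨IsOpenImmersion.isoOfRangeEq ι _ (range_sigmaDesc_sigmaι_of_isClopen _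
    (isClopen_range_of_isOpenImmersion_of_universallyClosed ι)).symm⟩⟩

/-- Let `S` be a connected scheme and let `ι : W ⟶ ⊔_{h ∈ H} S` be a morphism
of schemes which is both an open immersion and finite, where `⊔_{h ∈ H} S` is
the constant `S`-scheme on a finite set `H` (the coproduct of `#H` copies of
`S`). Then `W ≅ ⊔_{h ∈ H'} S` for some subset `H' ⊆ H`. -/
theorem clopen_in_constant_scheme_is_constant (S : Scheme.{u}) [ConnectedSpace S]
    (H : Type u) [Finite H] (W : Scheme.{u})
    (ι : W ⟶ ∐ (fun _ : H => S)) [IsOpenImmersion ι] [IsFinite ι] :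
    ∃ H' : Set H, Nonempty (W ≅ ∐ (fun _ : H' => S)) :=
  clopen_in_constant_scheme_is_constant_general S H W ι
end
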